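/- arXiv:1907.06732 — 4 statements merged into one kernel-verified Lean document; each statement's English description precedes it below -/
import Mathlib

section
/- Let F(x) = P(x)/Q(x) be a safe Padé Activation Unit with P(x) = ∑_{j=0}^{m} a_j x^j, A(x) = ∑_{k=1}^{n} b_k x^k, Q(x) = 1 + |A(x)|, and suppose at least one b_k is nonzero. Then F is differentiable at all but finitely many points of ℝ. -/
/-- Numerator polynomial `P(x) = ∑_{j=0}^m a_j x^j`. -/
noncomputable def padeP (a : ℕ → ℝ) (m : ℕ) (x : ℝ) : ℝ :=
  ∑ j ∈ Finset.range (m + 1), a j * x ^ j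

/-- `A(x) = ∑_{k=1}^n b_k x^k`. -/
noncomputable def padeA (b : ℕ → ℝ) (n : ℕ) (x : ℝ) : ℝ :=
  ∑ k ∈ Finset.Icc 1 n, b k * x ^ k

/-- Safe denominator `Q(x) = 1 + |A(x)|`. -/
noncomputable def padeQ (b : ℕ → ℝ) (n : ℕ) (x : ℝ) : ℝ :=
  1 + |padeA b n x|

/-- The safe Padé Activation Unit `F(x) = P(x)/Q(x)`. -/
noncomputable def safePAU (a b : ℕ → ℝ) (m n : ℕ) (x : ℝ) : ℝ :=
  padeP a m x / padeQ b n x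

theorem safePAU_differentiable_off_finite (m n : ℕ) (a b : ℕ → ℝ)
    (hb : ∃ k, 1 ≤ k ∧ k ≤ n ∧ b k ≠ 0) :
    {x : ℝ | ¬ DifferentiableAt ℝ (safePAU a b m n) x}.Finite := by
  obtain ⟨k, hk1, hkn, hbk⟩ := hb
  set p : Polynomial ℝ := ∑ k ∈ Finset.Icc 1 n, Polynomial.C (b k) * Polynomial.X ^ k with hp
  have hpeval : ∀ x, p.eval x = padeA b n x := by
    intro x
    simp [hp, padeA, Polynomial.eval_finset_sum]
  have hpne : p ≠ 0 := by
    intro h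
    have : p.coeff k = b k := by
      simp [hp, Polynomial.finset_sum_coeff, Polynomial.coeff_C_mul,
        Polynomial.coeff_X_pow, Finset.sum_ite_eq', Finset.mem_Icc, hk1, hkn]
    rw [h] at this
    simp at this
    exact hbk this.symm
  apply Set.Finite.subset (Polynomial.finite_setOf_isRoot hpne)
  intro x hx
  simp only [Set.mem_setOf_eq] at hx ⊢
  by_contra hroot
  apply hx
  have hA : padeA b n x ≠ 0 := fun h => hroot (by rw [Polynomial.IsRoot, hpeval]; exact h)
  have hdA : DifferentiableAt ℝ (padeA b n) x := by
    apply DifferentiableAt.fun_sum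
    intro i _
    exact (differentiableAt_pow i).const_mul _
  have hdP : DifferentiableAt ℝ (padeP a m) x := by
    apply DifferentiableAt.fun_sum
    intro i _
    exact (differentiableAt_pow i).const_mul _
  have hdQ : DifferentiableAt ℝ (padeQ b n) x := by
    unfold padeQ
    exact (differentiableAt_const 1).add (hdA.abs hA)
  have hQ : padeQ b n x ≠ 0 := by
    have : (0:ℝ) ≤ |padeA b n x| := abs_nonneg _
    unfold padeQ; linarith
  exact hdP.div hdQ hQ
end

section
/- Let P(x) = ∑_{j=0}^{m} a_j x^j be a real polynomial function that is not identically zero, let A(x) = ∑_{k=1}^{n} b_k x^k, and let F(x) = P(x)/(1 + |A(x)|) be the associated safe Padé Activation Unit. If there exist points x₁, x₂ ∈ ℝ with A(x₁) > 0 and A(x₂) < 0, then F is not a polynomial function: there is no real polynomial R with F(x) = R(x) for all x ∈ ℝ. -/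
theorem safePAU_not_polynomial (m n : ℕ) (a b : ℕ → ℝ)
    (hP : ∃ x : ℝ, padeP a m x ≠ 0)
    (x₁ x₂ : ℝ) (h₁ : 0 < padeA b n x₁) (h₂ : padeA b n x₂ < 0) :
    ¬ ∃ R : Polynomial ℝ, ∀ x : ℝ, safePAU a b m n x = R.eval x := by
  rintro ⟨R, hR⟩
  -- polynomial versions of P and A
  set Pp : Polynomial ℝ := ∑ j ∈ Finset.range (m + 1), Polynomial.C (a j) * Polynomial.X ^ j
    with hPp
  set Ap : Polynomial ℝ := ∑ k ∈ Finset.Icc 1 n, Polynomial.C (b k) * Polynomial.X ^ k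
    with hAp
  have hPev : ∀ x : ℝ, Pp.eval x = padeP a m x := by
    intro x; simp [hPp, padeP, Polynomial.eval_finset_sum]
  have hAev : ∀ x : ℝ, Ap.eval x = padeA b n x := by
    intro x; simp [hAp, padeA, Polynomial.eval_finset_sum]
  have hQpos : ∀ x : ℝ, 0 < padeQ b n x := by
    intro x; unfold padeQ; positivity
  have key : ∀ x : ℝ, padeP a m x = R.eval x * padeQ b n x := by
    intro x
    have h := hR x
    rw [safePAU, div_eq_iff (hQpos x).ne'] at h
    exact h
  -- f vanishes wherever A ≥ 0
  have hf : ∀ x : ℝ, 0 ≤ padeA b n x → (Pp - R * (1 + Ap)).eval x = 0 := by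
    intro x hx
    have hq : padeQ b n x = 1 + padeA b n x := by unfold padeQ; rw [abs_of_nonneg hx]
    simp only [Polynomial.eval_sub, Polynomial.eval_mul, Polynomial.eval_add,
      Polynomial.eval_one, hPev, hAev, key x, hq]
    ring
  have hg : ∀ x : ℝ, padeA b n x ≤ 0 → (Pp - R * (1 - Ap)).eval x = 0 := by
    intro x hx
    have hq : padeQ b n x = 1 - padeA b n x := by
      unfold padeQ; rw [abs_of_nonpos hx]; ring
    simp only [Polynomial.eval_sub, Polynomial.eval_mul, Polynomial.eval_one,
      hPev, hAev, key x, hq]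
    ring
  -- A continuous, positive near x₁ ⇒ f = 0 as a polynomial
  have hopen : IsOpen {x : ℝ | 0 < Ap.eval x} :=
    isOpen_lt continuous_const Ap.continuous
  have hx₁mem : x₁ ∈ {x : ℝ | 0 < Ap.eval x} := by simpa [hAev] using h₁
  obtain ⟨ε, hε, hball⟩ := Metric.isOpen_iff.mp hopen x₁ hx₁mem
  have hfz : (Pp - R * (1 + Ap)) = 0 := by
    apply Polynomial.eq_zero_of_infinite_isRoot
    have hsub : Set.Ioo (x₁ - ε) (x₁ + ε) ⊆ {x | (Pp - R * (1 + Ap)).IsRoot x} := by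
      intro x hx
      have hmem : x ∈ Metric.ball x₁ ε := by
        rw [Metric.mem_ball, Real.dist_eq, abs_lt]
        exact ⟨by linarith [hx.1], by linarith [hx.2]⟩
      have hpos := hball hmem
      exact hf x (le_of_lt (by simpa [hAev] using hpos))
    exact (Set.Ioo_infinite (by linarith : x₁ - ε < x₁ + ε)).mono hsub
  -- similarly near x₂
  have hopen2 : IsOpen {x : ℝ | Ap.eval x < 0} :=
    isOpen_lt Ap.continuous continuous_const
  have hx₂mem : x₂ ∈ {x : ℝ | Ap.eval x < 0} := by simpa [hAev] using h₂
  obtain ⟨δ, hδ, hball2⟩ := Metric.isOpen_iff.mp hopen2 x₂ hx₂mem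
  have hgz : (Pp - R * (1 - Ap)) = 0 := by
    apply Polynomial.eq_zero_of_infinite_isRoot
    have hsub : Set.Ioo (x₂ - δ) (x₂ + δ) ⊆ {x | (Pp - R * (1 - Ap)).IsRoot x} := by
      intro x hx
      have hmem : x ∈ Metric.ball x₂ δ := by
        rw [Metric.mem_ball, Real.dist_eq, abs_lt]
        exact ⟨by linarith [hx.1], by linarith [hx.2]⟩
      have hneg := hball2 hmem
      exact hg x (le_of_lt (by simpa [hAev] using hneg))
    exact (Set.Ioo_infinite (by linarith : x₂ - δ < x₂ + δ)).mono hsub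
  -- subtract: R * Ap = 0
  have hRA : R * Ap = 0 := by
    have h := sub_eq_zero.mpr (hfz.trans hgz.symm)
    have h0 : -(2 : Polynomial ℝ) * (R * Ap) = 0 := by rw [← h]; ring
    have h2 : (-(2 : Polynomial ℝ)) ≠ 0 := by
      simp only [neg_ne_zero]; exact (two_ne_zero : (2 : Polynomial ℝ) ≠ 0)
    exact (mul_eq_zero.mp h0).resolve_left h2
  have hApne : Ap ≠ 0 := by
    intro hc
    rw [hc] at hx₁mem
    simp at hx₁mem
  have hR0 : R = 0 := (mul_eq_zero.mp hRA).resolve_right hApne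
  obtain ⟨x₀, hx₀⟩ := hP
  apply hx₀
  rw [key x₀, hR0]
  simp
end

section
/- Let ρ(x) = P(x)/(1 + |A(x)|) be a safe Padé Activation Unit with P(x) = ∑_{j=0}^{m} a_j x^j not identically zero and A(x) = ∑_{k=1}^{n} b_k x^k, and suppose there exist x₁, x₂ ∈ ℝ with A(x₁) > 0 and A(x₂) < 0. Let d ∈ ℕ and let K ⊆ ℝ^d be a compact infinite set. Then the set of one-hidden-layer networks x ↦ ∑_{i=1}^{N} c_i · ρ(⟨w_i, x⟩ + θ_i) (with N ∈ ℕ, c_i, θ_i ∈ ℝ, w_i ∈ ℝ^d) is dense in C(K, ℝ) with the uniform norm. -/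
open scoped RealInnerProductSpace

open Set Filter Topology Polynomial Asymptotics

section FunctionSpaces

variable {X Y : Type*} [TopologicalSpace X] [TopologicalSpace Y]

lemma comp_mem_span_of_forall_mem {s : Set C(X, ℝ)} {W : Submodule ℝ C(Y, ℝ)} (f : C(Y, X))
    (hs : ∀ g ∈ s, g.comp f ∈ W) {g : C(X, ℝ)} (hg : g ∈ Submodule.span ℝ s) : g.comp f ∈ W :=
  (Submodule.span_le (p := W.comap (ContinuousMap.compRightAlgHom ℝ ℝ f).toLinearMap)).2 hs hg

lemma comp_mem_topologicalClosure {V : Submodule ℝ C(X, ℝ)} {W : Submodule ℝ C(Y, ℝ)}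
    (f : C(Y, X)) (hVW : ∀ g ∈ V, g.comp f ∈ W) {g : C(X, ℝ)} (hg : g ∈ V.topologicalClosure) :
    g.comp f ∈ W.topologicalClosure :=
  map_mem_closure (f := fun g : C(X, ℝ) => g.comp f) (ContinuousMap.continuous_precomp f) hg hVW

end FunctionSpaces

lemma ContinuousMap.mem_of_isClosed_of_forall_Icc {s : Set C(ℝ, ℝ)} (hs : IsClosed s) {g : C(ℝ, ℝ)}
    (h : ∀ R > 0, ∀ ε > 0, ∃ v ∈ s, ∀ t ∈ Icc (-R) R, |g t - v t| ≤ ε) : g ∈ s := by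
  refine hs.closure_subset ?_
  rw [mem_closure_iff_nhds_basis (nhds_basis_uniformity' hasBasis_compactConvergenceUniformity)]
  rintro ⟨K, U⟩ ⟨hK, hU⟩
  obtain ⟨ε, hε, hεU⟩ := Metric.mem_uniformity_dist.1 hU
  obtain ⟨R, hR, hKR⟩ := hK.isBounded.subset_closedBall_lt 0 (0 : ℝ)
  obtain ⟨v, hv, hgv⟩ := h R hR (ε / 2) (half_pos hε)
  refine ⟨v, hv, fun t ht => hεU ?_⟩
  have htR : t ∈ Icc (-R) R := by
    simpa [abs_le, Real.dist_eq] using hKR ht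
  rw [Real.dist_eq]
  linarith [hgv t htR]

def affineCM (l θ : ℝ) : C(ℝ, ℝ) := ⟨fun t => l * t + θ, by fun_prop⟩

@[simp] lemma affineCM_apply (l θ t : ℝ) : affineCM l θ t = l * t + θ := rfl

def networkSpan (ρ : C(ℝ, ℝ)) : Submodule ℝ C(ℝ, ℝ) :=
  Submodule.span ℝ (range fun p : ℝ × ℝ => ρ.comp (affineCM p.1 p.2))

lemma comp_affineCM_mem_networkSpan_closure {ρ g : C(ℝ, ℝ)}
    (hg : g ∈ (networkSpan ρ).topologicalClosure) (α β : ℝ) :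
    g.comp (affineCM α β) ∈ (networkSpan ρ).topologicalClosure := by
  refine comp_mem_topologicalClosure _ (fun h hh => comp_mem_span_of_forall_mem _ ?_ hh) hg
  rintro _ ⟨⟨l, θ⟩, rfl⟩
  refine Submodule.subset_span ⟨(l * α, l * β + θ), ?_⟩
  ext t
  simp only [ContinuousMap.comp_apply, affineCM_apply]
  ring_nf

def fwdDiffCM (g : C(ℝ, ℝ)) : C(ℝ, ℝ) := g.comp (affineCM 1 1) - g

lemma coe_fwdDiffCM_iterate (k : ℕ) (g : C(ℝ, ℝ)) : ⇑(fwdDiffCM^[k] g) = (fwdDiff 1)^[k] ⇑g := by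
  induction k generalizing g with
  | zero => rfl
  | succ k ih =>
    rw [Function.iterate_succ_apply, Function.iterate_succ_apply, ih]
    congr 1
    ext t
    simp [fwdDiffCM, fwdDiff]

lemma fwdDiffCM_iterate_mem_networkSpan_closure {ρ : C(ℝ, ℝ)} (k : ℕ) {g : C(ℝ, ℝ)}
    (hg : g ∈ (networkSpan ρ).topologicalClosure) :
    fwdDiffCM^[k] g ∈ (networkSpan ρ).topologicalClosure := by
  induction k generalizing g with
  | zero => exact hg
  | succ k ih =>
    exact ih (Submodule.sub_mem _ (comp_affineCM_mem_networkSpan_closure hg 1 1) hg)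

lemma abs_fwdDiff_iterate_le {f : ℝ → ℝ} {n : ℕ} {y M : ℝ}
    (hf : ∀ i ≤ n, |f (y + i)| ≤ M) : |(fwdDiff 1)^[n] f y| ≤ 2 ^ n * M := by
  rw [fwdDiff_iter_eq_sum_shift]
  calc _ ≤ ∑ i ∈ Finset.range (n + 1), (n.choose i : ℝ) * M := by
        refine (Finset.abs_sum_le_sum_abs _ _).trans (Finset.sum_le_sum fun i hi => ?_)
        have hi : i ≤ n := Nat.lt_succ_iff.1 (Finset.mem_range.1 hi)
        rw [zsmul_eq_mul, abs_mul, nsmul_eq_mul, mul_one]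
        push_cast
        rw [abs_mul, abs_pow, abs_neg, abs_one, one_pow, one_mul, Nat.abs_cast]
        exact mul_le_mul_of_nonneg_left (hf i hi) (Nat.cast_nonneg _)
    _ = 2 ^ n * M := by
        rw [← Finset.sum_mul]
        exact_mod_cast congrArg (fun x : ℕ => (x : ℝ) * M) (Nat.sum_range_choose n)

lemma abs_fwdDiff_iterate_comp_le {r : ℝ → ℝ} {x₀ ε δ s B t : ℝ} {j n : ℕ} (hs : 0 < s)
    (hε : 0 ≤ ε) (hsB : s * B < δ) (hr : ∀ y, dist y x₀ < δ → ‖r y‖ ≤ ε * ‖(y - x₀) ^ j‖)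
    (ht : ∀ i ≤ n, |t + i| ≤ B) :
    |(fwdDiff 1)^[n] (fun u => r (s * u + x₀)) t| ≤ 2 ^ n * (ε * (s * B) ^ j) := by
  refine abs_fwdDiff_iterate_le fun i hi => ?_
  have hsti : |s * (t + i)| ≤ s * B := by
    rw [abs_mul, abs_of_pos hs]
    exact mul_le_mul_of_nonneg_left (ht i hi) hs.le
  have h := hr (s * (t + i) + x₀) (by rw [Real.dist_eq, add_sub_cancel_right]; linarith)
  rw [add_sub_cancel_right, Real.norm_eq_abs, Real.norm_eq_abs, abs_pow] at h
  exact h.trans (mul_le_mul_of_nonneg_left (pow_le_pow_left₀ (abs_nonneg _) hsti j) hε)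

def truncPow (j : ℕ) : C(ℝ, ℝ) := ⟨fun t => max t 0 ^ j, by fun_prop⟩

/-- `j!` times the cardinal B-spline of degree `j`, reflected so that it lives on `[-(j+1), 0]`. -/
def bSpline (j : ℕ) : C(ℝ, ℝ) := fwdDiffCM^[j + 1] (truncPow j)

lemma bSpline_apply (j : ℕ) (t : ℝ) :
    bSpline j t = ∑ i ∈ Finset.range (j + 2),
      ((-1 : ℤ) ^ (j + 1 - i) * (j + 1).choose i) • max (t + i) 0 ^ j := by
  rw [bSpline, coe_fwdDiffCM_iterate, fwdDiff_iter_eq_sum_shift]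
  simp [truncPow]

lemma fwdDiff_iter_pow_sum_eq_zero (j : ℕ) (t : ℝ) :
    ∑ i ∈ Finset.range (j + 2), ((-1 : ℤ) ^ (j + 1 - i) * (j + 1).choose i) • (t + i) ^ j = 0 := by
  have h := congrFun (fwdDiff_iter_pow_eq_zero_of_lt (R := ℝ) (Nat.lt_succ_self j)) t
  simpa [fwdDiff_iter_eq_sum_shift] using h

lemma bSpline_eq_zero_of_nonneg (j : ℕ) {t : ℝ} (ht : 0 ≤ t) : bSpline j t = 0 := by
  rw [bSpline_apply]
  refine (Finset.sum_congr rfl fun i _ => ?_).trans (fwdDiff_iter_pow_sum_eq_zero j t)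
  rw [max_eq_left (add_nonneg ht i.cast_nonneg)]

lemma bSpline_eq_zero_of_le {j : ℕ} (hj : j ≠ 0) {t : ℝ} (ht : t ≤ -(j + 1)) : bSpline j t = 0 := by
  rw [bSpline_apply]
  refine Finset.sum_eq_zero fun i hi => ?_
  have hi : (i : ℝ) ≤ j + 1 := by
    exact_mod_cast Nat.lt_succ_iff.1 (Finset.mem_range.1 hi)
  rw [max_eq_right (by linarith), zero_pow hj, smul_zero]

lemma bSpline_eq_neg_pow {j : ℕ} (hj : j ≠ 0) {t : ℝ} (ht : t ∈ Icc (-1) 0) :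
    bSpline j t = (-t) ^ j := by
  rw [← sub_zero (bSpline j t), ← fwdDiff_iter_pow_sum_eq_zero j t, bSpline_apply,
    ← Finset.sum_sub_distrib, Finset.sum_range_succ', Finset.sum_eq_zero fun i _ => ?_]
  · simp [max_eq_right ht.2, zero_pow hj, neg_pow t, pow_succ]
  · rw [← smul_sub, max_eq_left (by push_cast; linarith [ht.1]), sub_self, smul_zero]

def HasKinkAt (ρ : ℝ → ℝ) (x₀ c : ℝ) (j : ℕ) : Prop :=
  ∃ T : ℝ[X], T.natDegree ≤ j ∧
    (fun y => ρ y - T.eval y - c * max (y - x₀) 0 ^ j) =o[𝓝 x₀] fun y => (y - x₀) ^ j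

lemma fwdDiffCM_iterate_comp_affineCM (ρ : C(ℝ, ℝ)) {x₀ c s : ℝ} (hs : 0 < s) {j : ℕ}
    {T : ℝ[X]} (hT : T.natDegree ≤ j) (t : ℝ) :
    fwdDiffCM^[j + 1] (ρ.comp (affineCM s x₀)) t = s ^ j * c * bSpline j t +
      (fwdDiff 1)^[j + 1]
        (fun u => ρ (s * u + x₀) - T.eval (s * u + x₀) - c * max (s * u + x₀ - x₀) 0 ^ j) t := by
  have hsplit : ⇑(ρ.comp (affineCM s x₀)) = (fun u => (T.comp (C s * X + C x₀)).eval u) +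
      (s ^ j * c) • ⇑(truncPow j) +
      fun u => ρ (s * u + x₀) - T.eval (s * u + x₀) - c * max (s * u + x₀ - x₀) 0 ^ j := by
    ext u
    have hmax : max (s * u) 0 = s * max u 0 := by rw [mul_max_of_nonneg _ _ hs.le, mul_zero]
    simp only [ContinuousMap.comp_apply, affineCM_apply, Pi.add_apply, Pi.smul_apply, eval_comp,
      eval_add, eval_mul, eval_C, eval_X, truncPow, ContinuousMap.coe_mk, smul_eq_mul,
      add_sub_cancel_right, hmax, mul_pow]
    ring
  have hTdeg : (T.comp (C s * X + C x₀)).natDegree < j + 1 :=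
    (natDegree_comp_le.trans (Nat.mul_le_mul hT natDegree_linear_le)).trans_lt (by omega)
  rw [coe_fwdDiffCM_iterate, hsplit, fwdDiff_iter_add, fwdDiff_iter_add, fwdDiff_iter_const_smul,
    Polynomial.fwdDiff_iter_eq_zero_of_degree_lt hTdeg]
  simp only [Pi.add_apply, Pi.smul_apply, zero_add, smul_eq_mul, bSpline, coe_fwdDiffCM_iterate]

lemma HasKinkAt.smul_bSpline_mem {ρ : C(ℝ, ℝ)} {x₀ c : ℝ} {j : ℕ} (h : HasKinkAt ρ x₀ c j) :
    c • bSpline j ∈ (networkSpan ρ).topologicalClosure := by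
  obtain ⟨T, hT, hr⟩ := h
  refine ContinuousMap.mem_of_isClosed_of_forall_Icc (networkSpan ρ).isClosed_topologicalClosure
    fun R hR ε hε => ?_
  set B : ℝ := R + j + 1
  have hB : 0 < B := by positivity
  set ε' := ε / (2 ^ (j + 1) * B ^ j)
  obtain ⟨δ, hδ, hδr⟩ := Metric.eventually_nhds_iff.1 (hr.def (by positivity : 0 < ε'))
  set s := δ / (2 * B)
  have hs : 0 < s := by positivity
  have hsB : s * B < δ := by
    rw [div_mul_eq_mul_div, div_lt_iff₀ (by positivity)]
    nlinarith
  refine ⟨(s ^ j)⁻¹ • fwdDiffCM^[j + 1] (ρ.comp (affineCM s x₀)),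
    Submodule.smul_mem _ _ (fwdDiffCM_iterate_mem_networkSpan_closure _
      ((networkSpan ρ).le_topologicalClosure (Submodule.subset_span ⟨(s, x₀), rfl⟩))),
    fun t ht => ?_⟩
  set D := (fwdDiff 1)^[j + 1]
    (fun u => ρ (s * u + x₀) - T.eval (s * u + x₀) - c * max (s * u + x₀ - x₀) 0 ^ j) t
  have hD : |D| ≤ 2 ^ (j + 1) * (ε' * (s * B) ^ j) :=
    abs_fwdDiff_iterate_comp_le hs (by positivity) hsB (fun y hy => hδr hy) fun i hi => by
      have : (i : ℝ) ≤ j + 1 := by exact_mod_cast hi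
      rw [abs_le]
      constructor <;> linarith [ht.1, ht.2]
  have hsj : 0 < s ^ j := pow_pos hs j
  have herr : (c • bSpline j) t - ((s ^ j)⁻¹ • fwdDiffCM^[j + 1] (ρ.comp (affineCM s x₀))) t =
      -((s ^ j)⁻¹ * D) := by
    rw [ContinuousMap.smul_apply, ContinuousMap.smul_apply, fwdDiffCM_iterate_comp_affineCM ρ hs hT,
      smul_eq_mul, smul_eq_mul]
    field_simp
    ring
  rw [herr, abs_neg, abs_mul, abs_of_pos (inv_pos.2 hsj)]
  calc _ ≤ (s ^ j)⁻¹ * (2 ^ (j + 1) * (ε' * (s * B) ^ j)) := by gcongr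
    _ = ε := by
        simp only [ε', mul_pow]
        field_simp

lemma HasKinkAt.of_eventually_eq {ρ : ℝ → ℝ} {x₀ : ℝ} {j : ℕ} (hj : j ≠ 0) {T : ℝ[X]}
    (hT : T.natDegree ≤ j) {g h : ℝ → ℝ} (hg : ContinuousAt g x₀) (hh : ContinuousAt h x₀)
    (hρ : ∀ᶠ y in 𝓝 x₀, ρ y =
      T.eval y + (y - x₀) ^ (j + 1) * g y + if x₀ < y then (y - x₀) ^ j * h y else 0) :
    HasKinkAt ρ x₀ (h x₀) j := by
  refine ⟨T, hT, ?_⟩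
  set e : ℝ → ℝ := fun y => (y - x₀) * g y + if x₀ < y then h y - h x₀ else 0
  have he : Tendsto e (𝓝 x₀) (𝓝 0) := by
    have h₁ : Tendsto (fun y => (y - x₀) * g y) (𝓝 x₀) (𝓝 0) := by
      have hc : ContinuousAt (fun y => (y - x₀) * g y) x₀ :=
        (continuousAt_id.sub continuousAt_const).mul hg
      simpa using hc.tendsto
    have h₂ : Tendsto (fun y => if x₀ < y then h y - h x₀ else 0) (𝓝 x₀) (𝓝 0) := by
      refine squeeze_zero_norm (fun y => ?_) (tendsto_iff_norm_sub_tendsto_zero.1 hh.tendsto)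
      split_ifs <;> simp
    simpa using h₁.add h₂
  have hlo : (fun y => (y - x₀) ^ j * e y) =o[𝓝 x₀] fun y => (y - x₀) ^ j := by
    simpa using (isBigO_refl (fun y => (y - x₀) ^ j) (𝓝 x₀)).mul_isLittleO
      ((isLittleO_one_iff ℝ).2 he)
  refine hlo.congr' ?_ EventuallyEq.rfl
  filter_upwards [hρ] with y hy
  simp only [hy, e]
  split_ifs with hxy
  · rw [max_eq_left (sub_nonneg.2 hxy.le)]
    ring
  · rw [max_eq_right (sub_nonpos.2 (not_lt.1 hxy)), zero_pow hj]
    ring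

lemma exists_polynomial_near_mul_exp {a b : ℝ} {H : ℝ → ℝ} (hH : ContinuousOn H (Icc a b))
    {ε : ℝ} (hε : 0 < ε) :
    ∃ p : ℝ[X], ∀ u ∈ Icc a b, |H u - Real.exp u * p.eval (Real.exp u)| ≤ ε := by
  have hG : ContinuousOn (fun y => H (Real.log y) / y) (Icc (Real.exp a) (Real.exp b)) := by
    refine (hH.comp (Real.continuousOn_log.mono fun y hy => (Real.exp_pos a).trans_le hy.1 |>.ne')
      fun y hy => ?_).div continuousOn_id fun y hy => ((Real.exp_pos a).trans_le hy.1).ne'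
    have hy0 := (Real.exp_pos a).trans_le hy.1
    exact ⟨(Real.le_log_iff_exp_le hy0).2 hy.1, (Real.log_le_iff_le_exp hy0).2 hy.2⟩
  obtain ⟨p, hp⟩ := exists_polynomial_near_of_continuousOn _ _ _ hG (ε / Real.exp b) (by positivity)
  refine ⟨p, fun u hu => ?_⟩
  have h := hp (Real.exp u) ⟨Real.exp_le_exp.2 hu.1, Real.exp_le_exp.2 hu.2⟩
  rw [Real.log_exp] at h
  have he := Real.exp_pos u
  calc |H u - Real.exp u * p.eval (Real.exp u)|
      = Real.exp u * |p.eval (Real.exp u) - H u / Real.exp u| := by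
        rw [← abs_of_pos he, ← abs_mul, abs_of_pos he, ← abs_neg]
        congr 1
        field_simp
        ring
    _ ≤ Real.exp b * (ε / Real.exp b) :=
        mul_le_mul (Real.exp_le_exp.2 hu.2) h.le (abs_nonneg _) (by positivity)
    _ = ε := mul_div_cancel₀ _ (Real.exp_pos b).ne'

lemma integral_mul_exp_mul_eval_eq_zero {a b : ℝ} (hab : a ≤ b) {H : ℝ → ℝ}
    (hH : ContinuousOn H (Icc a b)) (h : ∀ n : ℕ, ∫ u in a..b, H u * Real.exp ((n + 1) * u) = 0)
    (p : ℝ[X]) : ∫ u in a..b, H u * (Real.exp u * p.eval (Real.exp u)) = 0 := by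
  have hterm (u : ℝ) : H u * (Real.exp u * p.eval (Real.exp u)) =
      ∑ i ∈ Finset.range (p.natDegree + 1), p.coeff i * (H u * Real.exp ((i + 1) * u)) := by
    rw [p.eval_eq_sum_range, Finset.mul_sum, Finset.mul_sum]
    refine Finset.sum_congr rfl fun i _ => ?_
    rw [add_mul, one_mul, Real.exp_add, Real.exp_nat_mul]
    ring
  have hint (i : ℕ) : IntervalIntegrable (fun u => H u * Real.exp ((i + 1) * u))
      MeasureTheory.volume a b :=
    (hH.mul (by fun_prop)).intervalIntegrable_of_Icc hab
  simp_rw [hterm]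
  rw [intervalIntegral.integral_finsetSum fun i _ => (hint i).const_mul _]
  exact Finset.sum_eq_zero fun i _ => by rw [intervalIntegral.integral_const_mul, h i, mul_zero]

/-- Weierstrass approximation in the variable `exp u` shows that a continuous function orthogonal
to every `exp ((n + 1) * u)` is orthogonal to itself. -/
lemma exists_integral_mul_exp_ne_zero {a b : ℝ} (hab : a < b) {H : ℝ → ℝ}
    (hH : ContinuousOn H (Icc a b)) (hne : ∃ c ∈ Icc a b, H c ≠ 0) :
    ∃ n : ℕ, ∫ u in a..b, H u * Real.exp ((n + 1) * u) ≠ 0 := by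
  by_contra! h
  have horth := integral_mul_exp_mul_eval_eq_zero hab.le hH h
  obtain ⟨M, hM⟩ := isCompact_Icc.exists_bound_of_continuousOn hH
  have hsmall (ε : ℝ) (hε : 0 < ε) : ∫ u in a..b, H u ^ 2 ≤ M * ε * (b - a) := by
    obtain ⟨p, hp⟩ := exists_polynomial_near_mul_exp hH hε
    have hsq : IntervalIntegrable (fun u => H u * H u) MeasureTheory.volume a b :=
      (hH.mul hH).intervalIntegrable_of_Icc hab.le
    calc ∫ u in a..b, H u ^ 2
        = ∫ u in a..b, H u * (H u - Real.exp u * p.eval (Real.exp u)) := by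
          have hint : IntervalIntegrable (fun u => H u * (Real.exp u * p.eval (Real.exp u)))
              MeasureTheory.volume a b :=
            (hH.mul (by fun_prop)).intervalIntegrable_of_Icc hab.le
          simp_rw [mul_sub]
          rw [intervalIntegral.integral_sub hsq hint, horth, sub_zero]
          simp_rw [sq]
      _ ≤ ‖∫ u in a..b, H u * (H u - Real.exp u * p.eval (Real.exp u))‖ := Real.le_norm_self _
      _ ≤ M * ε * |b - a| := by
          refine intervalIntegral.norm_integral_le_of_norm_le_const fun u hu => ?_
          rw [uIoc_of_le hab.le] at hu
          rw [norm_mul]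
          exact mul_le_mul (hM u (Ioc_subset_Icc_self hu)) (hp u (Ioc_subset_Icc_self hu))
            (norm_nonneg _) ((norm_nonneg _).trans (hM u (Ioc_subset_Icc_self hu)))
      _ = M * ε * (b - a) := by rw [abs_of_pos (sub_pos.2 hab)]
  have hlim : Tendsto (fun ε => M * ε * (b - a)) (𝓝[>] 0) (𝓝 0) := by
    have hc : Continuous fun ε : ℝ => M * ε * (b - a) := by fun_prop
    simpa using (hc.tendsto 0).mono_left nhdsWithin_le_nhds
  have hle : ∫ u in a..b, H u ^ 2 ≤ 0 :=
    ge_of_tendsto hlim (eventually_nhdsWithin_of_forall fun ε hε => hsmall ε hε)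
  obtain ⟨c, hc, hHc⟩ := hne
  exact hle.not_gt
    (intervalIntegral.integral_pos hab (hH.pow 2) (fun _ _ => sq_nonneg _) ⟨c, hc, by positivity⟩)

lemma abs_integral_sub_mul_le {f : ℝ → ℝ} {a b η : ℝ} (hab : a ≤ b) (hf : Continuous f)
    (hη : ∀ y ∈ Ioc a b, |f y - f a| ≤ η) : |(∫ y in a..b, f y) - (b - a) * f a| ≤ η * (b - a) := by
  rw [← smul_eq_mul, ← intervalIntegral.integral_const,
    ← intervalIntegral.integral_sub (hf.intervalIntegrable _ _) intervalIntegrable_const,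
    ← Real.norm_eq_abs, ← abs_of_nonneg (sub_nonneg.2 hab)]
  refine intervalIntegral.norm_integral_le_of_norm_le_const fun y hy => ?_
  rw [uIoc_of_le hab] at hy
  exact hη y hy

lemma exists_riemannSum_near {X : Type*} [PseudoMetricSpace X] {K : Set X} (hK : IsCompact K)
    {Φ : X → ℝ → ℝ} (hΦ : Continuous (Function.uncurry Φ)) {c d : ℝ} (hcd : c ≤ d) {ε : ℝ}
    (hε : 0 < ε) : ∃ N : ℕ, ∀ t ∈ K, |(∫ x in c..d, Φ t x) -
      ∑ l ∈ Finset.range N, (d - c) / N * Φ t (c + l * ((d - c) / N))| ≤ ε := by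
  obtain ⟨δ, hδ, hΦδ⟩ := Metric.uniformContinuousOn_iff.1
    ((hK.prod (isCompact_Icc (a := c) (b := d))).uniformContinuousOn_of_continuous hΦ.continuousOn)
    (ε / (d - c + 1)) (by have := sub_nonneg.2 hcd; positivity)
  obtain ⟨N, hN⟩ := exists_nat_gt ((d - c) / δ)
  have hN0 : (0 : ℝ) < N := (div_nonneg (sub_nonneg.2 hcd) hδ.le).trans_lt hN
  set Δ := (d - c) / N
  have hΔ : 0 ≤ Δ := div_nonneg (sub_nonneg.2 hcd) hN0.le
  have hΔδ : Δ < δ := (div_lt_comm₀ hN0 hδ).2 hN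
  set x : ℕ → ℝ := fun l => c + l * Δ
  have hx : ∀ l ≤ N, x l ∈ Icc c d := fun l hl => by
    have : (l : ℝ) * Δ ≤ N * Δ := mul_le_mul_of_nonneg_right (by exact_mod_cast hl) hΔ
    have hNΔ : (N : ℝ) * Δ = d - c := mul_div_cancel₀ _ hN0.ne'
    constructor <;> simp only [x] <;> nlinarith
  refine ⟨N, fun t ht => ?_⟩
  have hΦt : Continuous (Φ t) := hΦ.comp (continuous_const.prodMk continuous_id)
  have hcell (l : ℕ) (hl : l < N) :
      |(∫ y in x l..x (l + 1), Φ t y) - Δ * Φ t (x l)| ≤ ε / (d - c + 1) * Δ := by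
    have hstep : x (l + 1) - x l = Δ := by simp only [x]; push_cast; ring
    rw [← hstep]
    refine abs_integral_sub_mul_le (by linarith) hΦt fun y hy => ?_
    have hy' : y ∈ Icc c d := ⟨(hx l hl.le).1.trans hy.1.le, hy.2.trans (hx (l + 1) hl).2⟩
    refine (hΦδ (t, y) ⟨ht, hy'⟩ (t, x l) ⟨ht, hx l hl.le⟩ ?_).le
    rw [Prod.dist_eq, dist_self, Real.dist_eq, abs_of_nonneg (by linarith [hy.1])]
    exact max_lt hδ (by linarith [hy.2])
  have hsplit : ∫ y in c..d, Φ t y = ∑ l ∈ Finset.range N, ∫ y in x l..x (l + 1), Φ t y := by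
    rw [intervalIntegral.sum_integral_adjacent_intervals fun l _ => hΦt.intervalIntegrable _ _]
    simp only [x, Nat.cast_zero, zero_mul, add_zero, Δ, mul_div_cancel₀ _ hN0.ne', add_sub_cancel]
  rw [hsplit, ← Finset.sum_sub_distrib]
  calc _ ≤ ∑ l ∈ Finset.range N, ε / (d - c + 1) * Δ :=
        (Finset.abs_sum_le_sum_abs _ _).trans
          (Finset.sum_le_sum fun l hl => hcell l (Finset.mem_range.1 hl))
    _ = ε * ((d - c) / (d - c + 1)) := by
        rw [Finset.sum_const, Finset.card_range, nsmul_eq_mul]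
        simp only [Δ]
        field_simp
    _ ≤ ε := mul_le_of_le_one_right hε.le
        ((div_le_one (by linarith)).2 (by linarith))

noncomputable def expCM (α : ℝ) : C(ℝ, ℝ) := ⟨fun t => Real.exp (α * t), by fun_prop⟩

lemma integral_exp_mul_comp_sub {H : ℝ → ℝ} {a b c d t : ℝ} (hsupp : Function.support H ⊆ Ioo a b)
    (hc : c ≤ t - b) (hd : t - a ≤ d) (β : ℝ) :
    ∫ x in c..d, Real.exp (-β * x) * H (t - x) =
      (∫ u in a..b, H u * Real.exp (β * u)) * Real.exp (-β * t) := by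
  set f : ℝ → ℝ := fun u => Real.exp (-β * (t - u)) * H u
  have hf : Function.support f ⊆ Ioo a b := (Function.support_mul_subset_right _ _).trans hsupp
  have hf_sub : ∀ x, Real.exp (-β * x) * H (t - x) = f (t - x) := fun x => by
    simp only [f, sub_sub_cancel]
  simp_rw [hf_sub]
  rw [intervalIntegral.integral_comp_sub_left f t,
    intervalIntegral.integral_eq_integral_of_support_subset
      (hf.trans (Ioo_subset_Ioc_self.trans (Ioc_subset_Ioc (by linarith) (by linarith)))),
    ← intervalIntegral.integral_eq_integral_of_support_subset (hf.trans Ioo_subset_Ioc_self),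
    ← intervalIntegral.integral_mul_const]
  refine intervalIntegral.integral_congr fun u _ => ?_
  simp only [f, mul_sub, Real.exp_sub, neg_mul, Real.exp_neg]
  field_simp

/-- The Riemann sums of the convolution in `integral_exp_mul_comp_sub` are combinations of
translates of `H`. -/
lemma smul_expCM_mem_networkSpan_closure {ρ H : C(ℝ, ℝ)}
    (hH : H ∈ (networkSpan ρ).topologicalClosure) {a b : ℝ} (hab : a ≤ b)
    (hsupp : Function.support H ⊆ Ioo a b) (β : ℝ) :
    (∫ u in a..b, H u * Real.exp (β * u)) • expCM (-β) ∈ (networkSpan ρ).topologicalClosure := by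
  refine ContinuousMap.mem_of_isClosed_of_forall_Icc (networkSpan ρ).isClosed_topologicalClosure
    fun R hR ε hε => ?_
  set Φ : ℝ → ℝ → ℝ := fun t x => Real.exp (-β * x) * H (t - x)
  obtain ⟨N, hN⟩ := exists_riemannSum_near (isCompact_Icc (a := -R) (b := R))
    (Φ := Φ) (by fun_prop) (by linarith : -R - b ≤ R - a) hε
  set Δ := (R - a - (-R - b)) / N
  refine ⟨∑ l ∈ Finset.range N, (Δ * Real.exp (-β * (-R - b + l * Δ))) •
      H.comp (affineCM 1 (-(-R - b + l * Δ))),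
    Submodule.sum_mem _ fun l _ => Submodule.smul_mem _ _
      (comp_affineCM_mem_networkSpan_closure hH _ _), fun t ht => ?_⟩
  have h := hN t ht
  rw [integral_exp_mul_comp_sub hsupp (by linarith [ht.1]) (by linarith [ht.2])] at h
  refine (le_of_eq ?_).trans h
  congr 2
  rw [ContinuousMap.sum_apply]
  refine Finset.sum_congr rfl fun l _ => ?_
  simp only [Φ, ContinuousMap.smul_apply, ContinuousMap.comp_apply, affineCM_apply, smul_eq_mul]
  ring_nf

lemma HasKinkAt.exists_expCM_mem {ρ : C(ℝ, ℝ)} {x₀ c : ℝ} {j : ℕ} (h : HasKinkAt ρ x₀ c j)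
    (hj : j ≠ 0) (hc : c ≠ 0) :
    ∃ α ≠ 0, expCM α ∈ (networkSpan ρ).topologicalClosure := by
  set H := c • bSpline j
  have hsupp : Function.support H ⊆ Ioo (-(j + 1 : ℝ)) 0 := by
    intro t ht
    by_contra hout
    rcases not_and_or.1 hout with h₁ | h₂
    · exact ht (by simp [H, bSpline_eq_zero_of_le hj (not_lt.1 h₁)])
    · exact ht (by simp [H, bSpline_eq_zero_of_nonneg j (not_lt.1 h₂)])
  have hne : H (-1 / 2) ≠ 0 := by
    rw [ContinuousMap.smul_apply, bSpline_eq_neg_pow hj ⟨by norm_num, by norm_num⟩, smul_eq_mul]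
    exact mul_ne_zero hc (pow_ne_zero _ (by norm_num))
  have hj0 : -(j + 1 : ℝ) < 0 := by linarith [(j.cast_nonneg : (0 : ℝ) ≤ j)]
  obtain ⟨n, hn⟩ := exists_integral_mul_exp_ne_zero hj0 H.continuous.continuousOn
    ⟨-1 / 2, ⟨by linarith [(j.cast_nonneg : (0 : ℝ) ≤ j)], by norm_num⟩, hne⟩
  refine ⟨-(n + 1), neg_ne_zero.2 (Nat.cast_add_one_ne_zero n), ?_⟩
  have hmem := Submodule.smul_mem _ (∫ u in -(j + 1 : ℝ)..0, H u * Real.exp ((n + 1) * u))⁻¹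
    (smul_expCM_mem_networkSpan_closure h.smul_bSpline_mem hj0.le hsupp (n + 1))
  rwa [smul_smul, inv_mul_cancel₀ hn, one_smul] at hmem

section InnerProductSpace

variable {E : Type*} [NormedAddCommGroup E] [InnerProductSpace ℝ E]

def networkSpanOn (ρ : C(ℝ, ℝ)) (K : Set E) : Submodule ℝ C(K, ℝ) :=
  Submodule.span ℝ
    (range fun p : E × ℝ => (⟨fun x : K => ρ (⟪p.1, (x : E)⟫ + p.2), by fun_prop⟩ : C(K, ℝ)))

def innerCM (K : Set E) (v : E) : C(K, ℝ) := ⟨fun x => ⟪v, (x : E)⟫, by fun_prop⟩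

lemma comp_innerCM_mem_networkSpanOn_closure {ρ g : C(ℝ, ℝ)}
    (hg : g ∈ (networkSpan ρ).topologicalClosure) (K : Set E) (v : E) :
    g.comp (innerCM K v) ∈ (networkSpanOn ρ K).topologicalClosure := by
  refine comp_mem_topologicalClosure _ (fun h hh => comp_mem_span_of_forall_mem _ ?_ hh) hg
  rintro _ ⟨⟨l, θ⟩, rfl⟩
  refine Submodule.subset_span ⟨(l • v, θ), ?_⟩
  ext x
  simp [innerCM, real_inner_smul_left]

lemma topologicalClosure_networkSpanOn_eq_top {ρ : C(ℝ, ℝ)} {α : ℝ} (hα : α ≠ 0)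
    (hexp : expCM α ∈ (networkSpan ρ).topologicalClosure) (K : Set E) [CompactSpace K] :
    (networkSpanOn ρ K).topologicalClosure = ⊤ := by
  set e : E → C(K, ℝ) := fun w => (expCM α).comp (innerCM K (α⁻¹ • w))
  have he (w : E) (x : K) : e w x = Real.exp ⟪w, (x : E)⟫ := by
    simp [e, expCM, innerCM, real_inner_smul_left, hα]
  have hmonoid : (Submonoid.closure (range e) : Set C(K, ℝ)) ⊆ range e := by
    intro f hf
    induction hf using Submonoid.closure_induction with
    | mem f hf => exact hf
    | one => exact ⟨0, by ext x; simp [he]⟩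
    | mul f g _ _ hf hg =>
      obtain ⟨v, rfl⟩ := hf
      obtain ⟨w, rfl⟩ := hg
      exact ⟨v + w, by ext x; simp [he, inner_add_left, Real.exp_add]⟩
  set A := Algebra.adjoin ℝ (range e)
  have hA : (A : Set C(K, ℝ)) ⊆ (networkSpanOn ρ K).topologicalClosure := by
    change (Subalgebra.toSubmodule A : Set C(K, ℝ)) ⊆ _
    rw [Algebra.adjoin_eq_span_of_subset ℝ (hmonoid.trans Submodule.subset_span)]
    refine Submodule.span_le.2 ?_
    rintro _ ⟨w, rfl⟩
    exact comp_innerCM_mem_networkSpanOn_closure hexp K _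
  have hsep : A.SeparatesPoints := by
    intro x y hxy
    refine ⟨_, ⟨e ((x : E) - y), Algebra.subset_adjoin ⟨_, rfl⟩, rfl⟩, fun h => hxy ?_⟩
    have h' := Real.exp_injective (by simpa only [he] using h)
    rw [← sub_eq_zero, ← inner_sub_right, real_inner_self_eq_norm_sq] at h'
    exact Subtype.ext (sub_eq_zero.1 (norm_eq_zero.1 (pow_eq_zero_iff two_ne_zero |>.1 h')))
  refine eq_top_iff.2 fun f _ =>
    closure_minimal hA (networkSpanOn ρ K).isClosed_topologicalClosure ?_
  rw [← Subalgebra.topologicalClosure_coe,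
    ContinuousMap.subalgebra_topologicalClosure_eq_top_of_separatesPoints A hsep]
  trivial

lemma exists_network_near {ρ : C(ℝ, ℝ)} {K : Set E} [CompactSpace K]
    (h : (networkSpanOn ρ K).topologicalClosure = ⊤) {f : E → ℝ} (hf : ContinuousOn f K)
    {ε : ℝ} (hε : 0 < ε) : ∃ (N : ℕ) (c θ : Fin N → ℝ) (w : Fin N → E),
      ∀ x ∈ K, |f x - ∑ i, c i * ρ (⟪w i, x⟫ + θ i)| < ε := by
  have hfK : (⟨K.domRestrict f, hf.domRestrict⟩ : C(K, ℝ)) ∈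
      closure (networkSpanOn ρ K : Set C(K, ℝ)) := by
    rw [← Submodule.topologicalClosure_coe, h]
    trivial
  obtain ⟨g, hg, hdist⟩ := Metric.mem_closure_iff.1 hfK ε hε
  obtain ⟨N, c, v, rfl⟩ := Submodule.mem_span_set'.1 hg
  choose p hp using fun i => (v i).2
  refine ⟨N, c, fun i => (p i).2, fun i => (p i).1, fun x hx => ?_⟩
  have hx := (ContinuousMap.dist_apply_le_dist ⟨x, hx⟩).trans_lt hdist
  rw [Real.dist_eq] at hx
  refine (le_of_eq ?_).trans_lt hx
  congr 2
  rw [ContinuousMap.sum_apply]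
  refine Finset.sum_congr rfl fun i _ => ?_
  rw [ContinuousMap.smul_apply, ← hp i, smul_eq_mul]
  rfl

end InnerProductSpace

lemma exists_sign_change {f : ℝ → ℝ} (hf : Continuous f) (hfin : {x | f x = 0}.Finite)
    {u v : ℝ} (huv : u ≤ v) (hu : f u < 0) (hv : 0 < f v) :
    ∃ x₀, f x₀ = 0 ∧ (∀ᶠ y in 𝓝[<] x₀, f y < 0) ∧ ∀ᶠ y in 𝓝[>] x₀, 0 < f y := by
  set S := {x ∈ Icc u v | f x < 0}
  have hSne : S.Nonempty := ⟨u, ⟨le_rfl, huv⟩, hu⟩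
  have hSbdd : BddAbove S := ⟨v, fun x hx => hx.1.2⟩
  set x₀ := sSup S
  have hux₀ : u ≤ x₀ := le_csSup hSbdd ⟨⟨le_rfl, huv⟩, hu⟩
  have hx₀_nonpos : f x₀ ≤ 0 := (isClosed_le hf continuous_const).closure_subset_iff.2
    (fun x hx => hx.2.le) (csSup_mem_closure hSne hSbdd)
  have hx₀v : x₀ < v := (csSup_le hSne fun x hx => hx.1.2).lt_of_ne
    fun h => by rw [← h] at hv; linarith
  have hiso : ∀ᶠ y in 𝓝 x₀, f y = 0 → y = x₀ := by
    filter_upwards [(hfin.sdiff (t := {x₀})).isClosed.isOpen_compl.mem_nhds fun h => h.2 rfl]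
      with y hy h0
    by_contra hne
    exact hy ⟨h0, hne⟩
  have hright : ∀ᶠ y in 𝓝[>] x₀, 0 < f y := by
    filter_upwards [Ioo_mem_nhdsGT hx₀v, nhdsWithin_le_nhds hiso] with y hy hy0
    have hnonneg : 0 ≤ f y := by
      by_contra! hneg
      exact (le_csSup hSbdd ⟨⟨hux₀.trans hy.1.le, hy.2.le⟩, hneg⟩).not_gt hy.1
    exact hnonneg.lt_of_ne fun h => hy.1.ne' (hy0 h.symm)
  have hx₀_zero : f x₀ = 0 := le_antisymm hx₀_nonpos
    (ge_of_tendsto (hf.continuousAt.tendsto.mono_left nhdsWithin_le_nhds)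
      (hright.mono fun y hy => hy.le))
  refine ⟨x₀, hx₀_zero, ?_, hright⟩
  obtain ⟨l, hl, hlx₀⟩ := mem_nhdsLT_iff_exists_Ioo_subset.1 (nhdsWithin_le_nhds hiso)
  obtain ⟨s, hsS, hls⟩ := exists_lt_of_lt_csSup hSne hl
  have hsx₀ : s < x₀ := (le_csSup hSbdd hsS).lt_of_ne fun h => by
    rw [h] at hsS
    linarith [hsS.2]
  filter_upwards [Ioo_mem_nhdsLT hl] with y hy
  by_contra! hy0
  -- a zero between `y` and `s` would be a second zero close to `x₀`
  obtain ⟨z, hz, hfz⟩ := intermediate_value_uIcc hf.continuousOn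
    (Set.mem_uIcc.2 (Or.inr ⟨hsS.2.le, hy0⟩) : (0 : ℝ) ∈ uIcc (f y) (f s))
  have hzI : z ∈ Ioo l x₀ := ordConnected_Ioo.uIcc_subset hy ⟨hls, hsx₀⟩ hz
  exact hzI.2.ne (hlx₀ hzI hfz)

lemma exists_eq_mul_add_X_sub_C_pow_mul {K : Type*} [Field K] {w : K[X]} {x₀ : K}
    (hw : w.eval x₀ ≠ 0) (P : K[X]) {k : ℕ} (hk : k ≠ 0) :
    ∃ T S : K[X], T.natDegree < k ∧ P = T * w + (X - C x₀) ^ k * S := by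
  obtain ⟨u, v, huv⟩ : IsCoprime ((X - C x₀) ^ k) w :=
    ((irreducible_X_sub_C x₀).coprime_iff_not_dvd.2 (by rwa [dvd_iff_isRoot])).pow_left
  have hmonic : ((X - C x₀) ^ k).Monic := (monic_X_sub_C x₀).pow k
  have hdeg : ((X - C x₀) ^ k).natDegree = k := by
    rw [(monic_X_sub_C x₀).natDegree_pow, natDegree_X_sub_C, mul_one]
  refine ⟨(P * v) %ₘ (X - C x₀) ^ k, P * u + (P * v /ₘ (X - C x₀) ^ k) * w, ?_, ?_⟩
  · have h := natDegree_modByMonic_lt (P * v) hmonic fun h => hk (by rw [← hdeg, h, natDegree_one])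
    rwa [hdeg] at h
  · linear_combination (-P) * huv - w * modByMonic_add_div (P * v) ((X - C x₀) ^ k)

lemma exists_sign_change_of_pos_of_neg {A : ℝ[X]} {x₁ x₂ : ℝ} (h₁ : 0 < A.eval x₁)
    (h₂ : A.eval x₂ < 0) : ∃ s : ℝ[X], (s = A ∨ s = -A) ∧
      ∃ x₀, s.eval x₀ = 0 ∧ (∀ᶠ y in 𝓝[<] x₀, s.eval y < 0) ∧ ∀ᶠ y in 𝓝[>] x₀, 0 < s.eval y := by
  have hA : A ≠ 0 := by
    rintro rfl
    exact h₁.ne' eval_zero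
  rcases le_total x₂ x₁ with h | h
  · exact ⟨A, Or.inl rfl,
      exists_sign_change A.continuous (finite_setOfPred_isRoot hA) h h₂ h₁⟩
  · exact ⟨-A, Or.inr rfl, exists_sign_change (-A).continuous
      (finite_setOfPred_isRoot (neg_ne_zero.2 hA)) h (by rwa [eval_neg, neg_neg_iff_pos])
      (by rwa [eval_neg, neg_pos])⟩

lemma div_one_add_abs_eq {x₀ y p σ T S μ : ℝ} {j : ℕ} (hσ : |σ| < 1)
    (hright : x₀ < y → 0 < σ) (hleft : ¬x₀ < y → σ ≤ 0)
    (hp : p = T * (1 - σ) + (y - x₀) ^ (j + 1) * S) (hν : (y - x₀) ^ j * μ = -2 * p * σ) :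
    p / (1 + |σ|) = T + (y - x₀) ^ (j + 1) * (S / (1 - σ)) +
      if x₀ < y then (y - x₀) ^ j * (μ / ((1 - σ) * (1 + σ))) else 0 := by
  rw [abs_lt] at hσ
  split_ifs with hxy
  · rw [abs_of_pos (hright hxy)]
    field_simp [show 1 - σ ≠ 0 by linarith, show 1 + σ ≠ 0 by linarith]
    linear_combination (1 + σ) * hp - hν
  · rw [abs_of_nonpos (hleft hxy), ← sub_eq_add_neg]
    field_simp [show 1 - σ ≠ 0 by linarith]
    linear_combination hp

lemma hasKinkAt_div_one_add_abs {P s : ℝ[X]} (hP : P ≠ 0) {x₀ : ℝ} (hs0 : s.eval x₀ = 0)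
    (hleft : ∀ᶠ y in 𝓝[<] x₀, s.eval y < 0) (hright : ∀ᶠ y in 𝓝[>] x₀, 0 < s.eval y) :
    ∃ c j, j ≠ 0 ∧ c ≠ 0 ∧ HasKinkAt (fun y => P.eval y / (1 + |s.eval y|)) x₀ c j := by
  have hs : s ≠ 0 := by
    rintro rfl
    obtain ⟨y, hy⟩ := hright.exists
    exact hy.ne' eval_zero
  -- the jump of `P / (1 + |s|)` across `x₀` is `ν / ((1 - s) * (1 + s))`
  set ν := C (-2) * P * s
  have hν : ν ≠ 0 := mul_ne_zero (mul_ne_zero (by simp) hP) hs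
  set j := rootMultiplicity x₀ ν
  set μ := ν /ₘ (X - C x₀) ^ j
  have hj : j ≠ 0 := ((rootMultiplicity_pos hν).2 (by simp [ν, hs0])).ne'
  have hfact : (X - C x₀) ^ j * μ = ν := pow_mul_divByMonic_rootMultiplicity_eq ν x₀
  set w := 1 - s
  obtain ⟨T, S, hT, hPTS⟩ :=
    exists_eq_mul_add_X_sub_C_pow_mul (w := w) (x₀ := x₀) (by simp [w, hs0]) P (Nat.succ_ne_zero j)
  set g := fun y => S.eval y / w.eval y
  set h := fun y => μ.eval y / (w.eval y * (1 + s.eval y))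
  have hg : ContinuousAt g x₀ := S.continuousAt.div w.continuousAt (by simp [w, hs0])
  have hh : ContinuousAt h x₀ :=
    μ.continuousAt.div (w.continuousAt.mul (continuousAt_const.add s.continuousAt))
      (by simp [w, hs0])
  refine ⟨h x₀, j, hj,
    by simpa [h, w, hs0] using eval_divByMonic_pow_rootMultiplicity_ne_zero x₀ hν,
    HasKinkAt.of_eventually_eq hj (Nat.lt_succ_iff.1 hT) hg hh ?_⟩
  have hsmall : ∀ᶠ y in 𝓝 x₀, |s.eval y| < 1 :=
    s.continuousAt.abs.eventually_lt continuousAt_const (by simp [hs0])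
  filter_upwards [hsmall, eventually_nhdsWithin_iff.1 hleft, eventually_nhdsWithin_iff.1 hright]
    with y hy hyl hyr
  have hPy : P.eval y = T.eval y * (1 - s.eval y) + (y - x₀) ^ (j + 1) * S.eval y := by
    simpa [w] using congrArg (eval y) hPTS
  have hνy : (y - x₀) ^ j * μ.eval y = -2 * P.eval y * s.eval y := by
    simpa [ν] using congrArg (eval y) hfact
  have hsign : ¬x₀ < y → s.eval y ≤ 0 := fun hxy => by
    rcases (not_lt.1 hxy).lt_or_eq with hlt | rfl
    · exact (hyl hlt).le
    · exact hs0.le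
  simpa [g, h, w] using div_one_add_abs_eq hy hyr hsign hPy hνy

lemma continuous_safePAU (a b : ℕ → ℝ) (m n : ℕ) : Continuous (safePAU a b m n) :=
  Continuous.div (by unfold padeP; fun_prop) (by unfold padeQ padeA; fun_prop)
    fun x => (add_pos_of_pos_of_nonneg one_pos (abs_nonneg (padeA b n x))).ne'

lemma safePAU_hasKinkAt {m n : ℕ} {a b : ℕ → ℝ} (hP : ∃ x, padeP a m x ≠ 0) {x₁ x₂ : ℝ}
    (h₁ : 0 < padeA b n x₁) (h₂ : padeA b n x₂ < 0) :
    ∃ x₀ c j, j ≠ 0 ∧ c ≠ 0 ∧ HasKinkAt (safePAU a b m n) x₀ c j := by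
  obtain ⟨P, hPe⟩ : ∃ P : ℝ[X], ∀ x, P.eval x = padeP a m x :=
    ⟨∑ j ∈ Finset.range (m + 1), C (a j) * X ^ j, fun x => by simp [padeP, eval_finsetSum]⟩
  obtain ⟨A, hAe⟩ : ∃ A : ℝ[X], ∀ x, A.eval x = padeA b n x :=
    ⟨∑ k ∈ Finset.Icc 1 n, C (b k) * X ^ k, fun x => by simp [padeA, eval_finsetSum]⟩
  have hP0 : P ≠ 0 := by
    rintro rfl
    obtain ⟨x, hx⟩ := hP
    exact hx (by rw [← hPe, eval_zero])
  obtain ⟨s, hsA, x₀, hs0, hleft, hright⟩ :=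
    exists_sign_change_of_pos_of_neg (A := A) (by rwa [hAe]) (by rwa [hAe] : A.eval x₂ < 0)
  have hρ : safePAU a b m n = fun y => P.eval y / (1 + |s.eval y|) := by
    ext y
    rcases hsA with rfl | rfl <;> simp [safePAU, padeQ, hPe, hAe]
  obtain ⟨c, j, hj, hc, hkink⟩ := hasKinkAt_div_one_add_abs hP0 hs0 hleft hright
  exact ⟨x₀, c, j, hj, hc, hρ ▸ hkink⟩

theorem safePAU_networks_dense_general (m n : ℕ) (a b : ℕ → ℝ)
    (hP : ∃ x : ℝ, padeP a m x ≠ 0)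
    (x₁ x₂ : ℝ) (h₁ : 0 < padeA b n x₁) (h₂ : padeA b n x₂ < 0)
    (d : ℕ) (K : Set (EuclideanSpace ℝ (Fin d))) (hK : IsCompact K) :
    ∀ f : EuclideanSpace ℝ (Fin d) → ℝ, ContinuousOn f K → ∀ ε > 0,
      ∃ (N : ℕ) (c θ : Fin N → ℝ) (w : Fin N → EuclideanSpace ℝ (Fin d)),
        ∀ x ∈ K, |f x - ∑ i, c i * safePAU a b m n (⟪w i, x⟫ + θ i)| < ε := by
  intro f hf ε hε
  obtain ⟨x₀, c, j, hj, hc, hkink⟩ := safePAU_hasKinkAt hP h₁ h₂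
  obtain ⟨α, hα, hexp⟩ :=
    HasKinkAt.exists_expCM_mem (ρ := ⟨safePAU a b m n, continuous_safePAU a b m n⟩) hkink hj hc
  have : CompactSpace K := isCompact_iff_compactSpace.1 hK
  exact exists_network_near (topologicalClosure_networkSpanOn_eq_top hα hexp K) hf hε

theorem safePAU_networks_dense (m n : ℕ) (a b : ℕ → ℝ)
    (hP : ∃ x : ℝ, padeP a m x ≠ 0)
    (x₁ x₂ : ℝ) (h₁ : 0 < padeA b n x₁) (h₂ : padeA b n x₂ < 0)
    (d : ℕ) (K : Set (EuclideanSpace ℝ (Fin d))) (hK : IsCompact K)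
    (hKinf : K.Infinite) :
    ∀ f : EuclideanSpace ℝ (Fin d) → ℝ, ContinuousOn f K → ∀ ε > 0,
      ∃ (N : ℕ) (c θ : Fin N → ℝ) (w : Fin N → EuclideanSpace ℝ (Fin d)),
        ∀ x ∈ K, |f x - ∑ i, c i * safePAU a b m n (⟪w i, x⟫ + θ i)| < ε :=
  safePAU_networks_dense_general m n a b hP x₁ x₂ h₁ h₂ d K hK
end

section
/- For β ∈ ℝ let swish_β(x) = x/(1 + e^{−βx}), and let P_β(x) = x/2 + (β/4)x² + (3β²/56)x³ + (β³/168)x⁴ + (β⁴/3360)x⁵ and Q_β(x) = 1 + (3β²/28)x² + (β⁴/1680)x⁴. Then for every β ∈ ℝ, swish_β(x) − P_β(x)/Q_β(x) = O(x^{10}) as x → 0; equivalently, swish_β(x)·Q_β(x) − P_β(x) = O(x^{10}) as x → 0. -/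
open Filter Asymptotics

/-- The Swish activation with parameter `β`: `swish_β(x) = x / (1 + e^{-βx})`. -/
noncomputable def swish (β x : ℝ) : ℝ := x / (1 + Real.exp (-(β * x)))

private lemma exp_rem (β : ℝ) :
    (fun x : ℝ => Real.exp (-(β * x)) - ∑ k ∈ Finset.range 10, (-(β * x)) ^ k / (Nat.factorial k))
      =O[nhds 0] fun x : ℝ => x ^ 10 := by
  rw [Asymptotics.isBigO_iff]
  refine ⟨|β| ^ 10 * (11 / (3628800 * 10)), ?_⟩
  have hδ : (0:ℝ) < 1 / (1 + |β|) := by positivity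
  filter_upwards [Metric.closedBall_mem_nhds (0:ℝ) hδ] with x hx
  rw [Metric.mem_closedBall, Real.dist_eq, sub_zero] at hx
  have habs : |(-(β * x))| ≤ 1 := by
    rw [abs_neg, abs_mul]
    have h1 : |β| * |x| ≤ |β| * (1 / (1 + |β|)) :=
      mul_le_mul_of_nonneg_left hx (abs_nonneg β)
    have h2 : |β| * (1 / (1 + |β|)) ≤ 1 := by
      rw [mul_one_div, div_le_one (by positivity)]
      linarith [abs_nonneg β]
    linarith
  have hb := Real.exp_bound habs (n := 10) (by norm_num)
  have hrw : |(-(β * x))| ^ 10 = |β| ^ 10 * |x| ^ 10 := by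
    rw [abs_neg, abs_mul, mul_pow]
  calc ‖Real.exp (-(β * x)) - ∑ k ∈ Finset.range 10, (-(β * x)) ^ k / (Nat.factorial k)‖
      ≤ |(-(β * x))| ^ 10 * ((10:ℕ).succ / ((10:ℕ).factorial * 10)) := hb
    _ = |β| ^ 10 * (11 / (3628800 * 10)) * ‖x ^ 10‖ := by
        rw [hrw]
        norm_num [Nat.factorial, Real.norm_eq_abs, abs_pow]
        ring

theorem swish_pade_approx (β : ℝ) :
    ((fun x : ℝ =>
        swish β x -
          (x / 2 + (β / 4) * x ^ 2 + (3 * β ^ 2 / 56) * x ^ 3 + (β ^ 3 / 168) * x ^ 4 +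
              (β ^ 4 / 3360) * x ^ 5) /
            (1 + (3 * β ^ 2 / 28) * x ^ 2 + (β ^ 4 / 1680) * x ^ 4))
      =O[nhds 0] fun x : ℝ => x ^ 10) ∧
    ((fun x : ℝ =>
        swish β x * (1 + (3 * β ^ 2 / 28) * x ^ 2 + (β ^ 4 / 1680) * x ^ 4) -
          (x / 2 + (β / 4) * x ^ 2 + (3 * β ^ 2 / 56) * x ^ 3 + (β ^ 3 / 168) * x ^ 4 +
            (β ^ 4 / 3360) * x ^ 5))
      =O[nhds 0] fun x : ℝ => x ^ 10) := by
  have hEpos : ∀ x : ℝ, (1:ℝ) ≤ 1 + Real.exp (-(β * x)) := fun x =>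
    le_add_of_nonneg_right (Real.exp_pos _).le
  set P : ℝ → ℝ := fun x => x / 2 + (β / 4) * x ^ 2 + (3 * β ^ 2 / 56) * x ^ 3 +
      (β ^ 3 / 168) * x ^ 4 + (β ^ 4 / 3360) * x ^ 5 with hPdef
  set Q : ℝ → ℝ := fun x => 1 + (3 * β ^ 2 / 28) * x ^ 2 + (β ^ 4 / 1680) * x ^ 4 with hQdef
  have hQpos : ∀ x : ℝ, (1:ℝ) ≤ Q x := by
    intro x; simp only [hQdef]; nlinarith [sq_nonneg (β * x), sq_nonneg (β ^ 2 * x ^ 2)]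
  -- the key: g x = x * Q x - P x * (1 + exp (-(β x))) is O(x^10)
  have hg : (fun x : ℝ => x * Q x - P x * (1 + Real.exp (-(β * x))))
      =O[nhds 0] fun x : ℝ => x ^ 10 := by
    have hsplit : ∀ x : ℝ, x * Q x - P x * (1 + Real.exp (-(β * x))) =
        x ^ 10 * (β ^ 9 / 50803200 + 13 * β ^ 10 * x / 101606400 + β ^ 11 * x ^ 2 / 16934400 +
            11 * β ^ 12 * x ^ 3 / 1219276800 + β ^ 13 * x ^ 4 / 1219276800) -
          P x * (Real.exp (-(β * x)) -
            ∑ k ∈ Finset.range 10, (-(β * x)) ^ k / (Nat.factorial k)) := by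
      intro x
      simp only [hPdef, hQdef, Finset.sum_range_succ, Finset.sum_range_zero, Nat.factorial]
      push_cast
      ring
    simp only [hsplit]
    apply IsBigO.sub
    · have h1 : (fun x : ℝ => β ^ 9 / 50803200 + 13 * β ^ 10 * x / 101606400 +
          β ^ 11 * x ^ 2 / 16934400 + 11 * β ^ 12 * x ^ 3 / 1219276800 +
          β ^ 13 * x ^ 4 / 1219276800) =O[nhds (0:ℝ)] (fun _ => (1:ℝ)) := by
        apply Filter.Tendsto.isBigO_one
        exact (Continuous.tendsto (by fun_prop) 0)
      simpa using (isBigO_refl (fun x : ℝ => x ^ 10) (nhds 0)).mul h1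
    · have hP1 : P =O[nhds (0:ℝ)] (fun _ => (1:ℝ)) := by
        apply Filter.Tendsto.isBigO_one
        exact (Continuous.tendsto (by fun_prop) 0)
      simpa using hP1.mul (exp_rem β)
  -- second part
  have h2 : (fun x : ℝ => swish β x * Q x - P x) =O[nhds 0] fun x : ℝ => x ^ 10 := by
    refine IsBigO.trans ?_ hg
    rw [Asymptotics.isBigO_iff]
    refine ⟨1, Filter.Eventually.of_forall fun x => ?_⟩
    have hE0 : (1 + Real.exp (-(β * x))) ≠ 0 := by positivity
    have heq : swish β x * Q x - P x =
        (x * Q x - P x * (1 + Real.exp (-(β * x)))) / (1 + Real.exp (-(β * x))) := by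
      simp only [swish]
      field_simp
    rw [heq, one_mul, Real.norm_eq_abs, Real.norm_eq_abs, abs_div]
    rw [abs_of_pos (by positivity : (0:ℝ) < 1 + Real.exp (-(β * x)))]
    exact div_le_self (abs_nonneg _) (hEpos x)
  refine ⟨?_, h2⟩
  refine IsBigO.trans ?_ h2
  rw [Asymptotics.isBigO_iff]
  refine ⟨1, Filter.Eventually.of_forall fun x => ?_⟩
  have hQ0 : Q x ≠ 0 := by have := hQpos x; linarith
  have heq : swish β x - P x / Q x = (swish β x * Q x - P x) / Q x := by
    field_simp
  rw [heq, one_mul, Real.norm_eq_abs, Real.norm_eq_abs, abs_div]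
  rw [abs_of_pos (by have := hQpos x; linarith : (0:ℝ) < Q x)]
  exact div_le_self (abs_nonneg _) (hQpos x)
end
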